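/- arXiv:2302.09366 — 8 statements merged into one kernel-verified Lean document; each statement's English description precedes it below -/
import Mathlib

section
/- If f : G → G' is a gyro-homomorphism between groups, then f(a⁻¹) = f(a)⁻¹ for all a ∈ G. -/
theorem gyroHom_map_inv {G G' : Type*} [Group G] [Group G'] (f : G → G')
    (hf : ∀ x y : G, f (y⁻¹ * x * y ^ 2) = (f y)⁻¹ * f x * (f y) ^ 2) :
    ∀ a : G, f a⁻¹ = (f a)⁻¹ := by
  have he : f 1 = 1 := by
    have := hf 1 1
    simp at this
    have h2 : f 1 * (f 1)⁻¹ = f 1 ^ 2 * (f 1)⁻¹ := by rw [← this]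
    simpa [pow_two, mul_assoc] using h2.symm
  intro a
  have h := hf a⁻¹ a
  rw [show a⁻¹ * a⁻¹ * a ^ 2 = 1 from by group, he] at h
  have h2 := congrArg (fun z => f a * z * (f a ^ 2)⁻¹) h
  simp only [mul_one] at h2
  rw [show f a * ((f a)⁻¹ * f a⁻¹ * f a ^ 2) * (f a ^ 2)⁻¹ = f a⁻¹ from by group] at h2
  rw [← h2]; group
end

section
/- If f : G → G' is a gyro-homomorphism between groups, then f(aⁿ) = f(a)ⁿ for all a ∈ G and all integers n. -/
theorem gyroHom_map_zpow {G G' : Type*} [Group G] [Group G'] (f : G → G')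
    (hf : ∀ x y : G, f (y⁻¹ * x * y ^ 2) = (f y)⁻¹ * f x * (f y) ^ 2) :
    ∀ (a : G) (n : ℤ), f (a ^ n) = (f a) ^ n := by
  have h1 : f 1 = 1 := by
    have h := hf 1 1
    simp only [inv_one, one_mul, one_pow, mul_one] at h
    have h2 : f 1 * f 1 = f 1 * 1 := by
      rw [mul_one]
      calc f 1 * f 1 = (f 1)⁻¹ * f 1 * (f 1)^2 := by rw [pow_two]; group
        _ = f 1 := h.symm
    exact (mul_left_cancel h2)
  have key : ∀ (a : G) (n : ℤ), f (a ^ (n + 1)) = (f a)⁻¹ * f (a ^ n) * (f a) ^ 2 := by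
    intro a n
    have h := hf (a ^ n) a
    rw [show a⁻¹ * a ^ n * a ^ 2 = a ^ (n + 1) by
      rw [← zpow_natCast a 2, ← zpow_neg_one]
      rw [← zpow_add, ← zpow_add]
      ring_nf] at h
    exact h
  intro a n
  induction n using Int.induction_on with
  | zero => simpa using h1
  | succ k ih =>
    have := key a k
    rw [ih] at this
    rw [this]; group
  | pred k ih =>
    have := key a (-k - 1)
    rw [show (-k - 1 : ℤ) + 1 = -k by ring, ih] at this
    have h2 : f (a ^ (-(k:ℤ) - 1)) = f a * (f a) ^ (-(k:ℤ)) * ((f a)^2)⁻¹ := by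
      rw [this]; group
    rw [h2]; group
end

section
/- A map f : G → G' between groups is a gyro-homomorphism if and only if f(e) = e and f(y⁻¹ x y²) = f(y⁻¹) f(x) f(y²) for all x, y ∈ G. -/
theorem gyroHom_iff {G G' : Type*} [Group G] [Group G'] (f : G → G') :
    (∀ x y : G, f (y⁻¹ * x * y ^ 2) = (f y)⁻¹ * f x * (f y) ^ 2) ↔
      (f 1 = 1 ∧ ∀ x y : G, f (y⁻¹ * x * y ^ 2) = f y⁻¹ * f x * f (y ^ 2)) := by
  constructor
  · intro h
    have h1 : f 1 = 1 := by
      have e := h 1 1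
      simp at e
      have : f 1 * 1 = f 1 * f 1 := by rw [mul_one]; nth_rewrite 1 [e]; rw [sq]
      exact (mul_left_cancel this).symm
    have hinv : ∀ y : G, f y⁻¹ = (f y)⁻¹ := by
      intro y
      have e := h y⁻¹ y
      have er : y⁻¹ * y⁻¹ * y ^ 2 = 1 := by group
      rw [er, h1] at e
      have : f y * 1 * (f y)⁻¹ ^ 2 = f y * ((f y)⁻¹ * f y⁻¹ * f y ^ 2) * (f y)⁻¹ ^ 2 := by
        rw [← e]
      rw [eq_comm]
      calc (f y)⁻¹ = f y * 1 * (f y)⁻¹ ^ 2 := by group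
        _ = f y * ((f y)⁻¹ * f y⁻¹ * f y ^ 2) * (f y)⁻¹ ^ 2 := this
        _ = f y⁻¹ := by group
    have hsq : ∀ y : G, f (y ^ 2) = (f y) ^ 2 := by
      intro y
      have e := h y y
      have er : y⁻¹ * y * y ^ 2 = y ^ 2 := by group
      rw [er] at e
      rw [e]; group
    refine ⟨h1, fun x y => ?_⟩
    rw [h, hinv, hsq]
  · rintro ⟨h1, h⟩
    have key : ∀ y : G, f y⁻¹ = (f y)⁻¹ ∧ f (y ^ 2) = (f y) ^ 2 := by
      intro y
      have e1 := h 1 y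
      rw [show y⁻¹ * (1:G) * y ^ 2 = y by group, h1, mul_one] at e1
      have e2 := h y⁻¹ y
      have er : y⁻¹ * y⁻¹ * y ^ 2 = 1 := by group
      rw [er, h1] at e2
      have hsq : f (y ^ 2) = (f y⁻¹)⁻¹ ^ 2 := by
        calc f (y ^ 2) = (f y⁻¹)⁻¹ ^ 2 * (f y⁻¹ * f y⁻¹ * f (y ^ 2)) := by group
          _ = (f y⁻¹)⁻¹ ^ 2 * 1 := by rw [← e2]
          _ = (f y⁻¹)⁻¹ ^ 2 := by group
      have hy : f y = (f y⁻¹)⁻¹ := by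
        rw [e1, hsq]; group
      constructor
      · rw [hy]; group
      · rw [hsq, hy]
    intro x y
    rw [h, (key y).1, (key y).2]
end

section
/- An identity-preserving map t : G → G' between groups is a gyro-homomorphism if and only if ∂t(y⁻¹, x) · ∂t(y⁻¹x, y²) = 1 for all x, y ∈ G, where ∂t(x, y) = t(x) t(y) t(xy)⁻¹. -/
theorem gyroHom_iff_boundary {G G' : Type*} [Group G] [Group G'] (t : G → G')
    (ht : t 1 = 1) :
    (∀ x y : G, t (y⁻¹ * x * y ^ 2) = (t y)⁻¹ * t x * (t y) ^ 2) ↔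
      (∀ x y : G,
        (t y⁻¹ * t x * (t (y⁻¹ * x))⁻¹) *
          (t (y⁻¹ * x) * t (y ^ 2) * (t (y⁻¹ * x * y ^ 2))⁻¹) = 1) := by
  constructor
  · intro h
    have hinv : ∀ y : G, t y⁻¹ = (t y)⁻¹ := by
      intro y
      have e := h y⁻¹ y
      have harg : y⁻¹ * y⁻¹ * y ^ 2 = 1 := by group
      rw [harg, ht, mul_assoc] at e
      -- e : 1 = (t y)⁻¹ * (t y⁻¹ * t y ^ 2)
      have e2 : t y = t y⁻¹ * t y ^ 2 := inv_mul_eq_one.mp e.symm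
      have e3 : t y⁻¹ = t y * (t y ^ 2)⁻¹ := eq_mul_inv_of_mul_eq e2.symm
      rw [e3]; group
    have hsq : ∀ y : G, t (y ^ 2) = (t y) ^ 2 := by
      intro y
      have e := h (y ^ 2) y⁻¹
      have harg : (y⁻¹)⁻¹ * y ^ 2 * (y⁻¹) ^ 2 = y := by group
      rw [harg, hinv y] at e
      -- e : t y = ((t y)⁻¹)⁻¹ * t (y ^ 2) * ((t y)⁻¹) ^ 2
      have e2 : ((t y)⁻¹)⁻¹ * t (y ^ 2) = t y * (((t y)⁻¹) ^ 2)⁻¹ :=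
        eq_mul_inv_of_mul_eq e.symm
      have e3 : t (y ^ 2) = ((t y)⁻¹)⁻¹⁻¹ * (t y * (((t y)⁻¹) ^ 2)⁻¹) :=
        eq_inv_mul_of_mul_eq e2
      rw [e3]; group
    intro x y
    rw [hinv y, hsq y, h x y]
    group
  · intro h
    have key : ∀ x y : G, t (y⁻¹ * x * y ^ 2) = t y⁻¹ * t x * t (y ^ 2) := by
      intro x y
      have h1 := h x y
      have h2 : (t y⁻¹ * t x * t (y ^ 2)) * (t (y⁻¹ * x * y ^ 2))⁻¹ = 1 := by
        rw [← h1]; group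
      exact (mul_inv_eq_one.mp h2).symm
    have hinv : ∀ y : G, t y⁻¹ = (t y)⁻¹ := by
      intro y
      have e := key y y
      have harg : y⁻¹ * y * y ^ 2 = y ^ 2 := by group
      rw [harg] at e
      -- e : t (y ^ 2) = t y⁻¹ * t y * t (y ^ 2)
      have e2 : (t y⁻¹ * t y) * t (y ^ 2) = 1 * t (y ^ 2) := by
        rw [← e, one_mul]
      exact eq_inv_of_mul_eq_one_left (mul_right_cancel e2)
    have hsq : ∀ y : G, t (y ^ 2) = (t y) ^ 2 := by
      intro y
      have e := key y⁻¹ y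
      have harg : y⁻¹ * y⁻¹ * y ^ 2 = 1 := by group
      rw [harg, ht, hinv y] at e
      -- e : 1 = (t y)⁻¹ * (t y)⁻¹ * t (y ^ 2)
      have e2 : t (y ^ 2) = ((t y)⁻¹ * (t y)⁻¹)⁻¹ :=
        eq_inv_of_mul_eq_one_right e.symm
      rw [e2]; group
    intro x y
    rw [key x y, hinv y, hsq y]
end

section
/- Let G be a group, H a normal subgroup, and S a subset of G closed under the operation x ∘₁ y = y⁻¹ x y² with 1 ∈ S. If G = HS and for every y ∈ S we have H y² ∩ S = {y²}, then S is a right transversal of H in G, i.e., every coset Hg meets S in exactly one element. -/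
theorem subloop_is_transversal {G : Type*} [Group G] (H : Subgroup G)
    [H.Normal] (S : Set G) (h1 : (1 : G) ∈ S)
    (hcl : ∀ x ∈ S, ∀ y ∈ S, y⁻¹ * x * y ^ 2 ∈ S)
    (hHS : ∀ g : G, ∃ h ∈ H, ∃ s ∈ S, g = h * s)
    (hmeet : ∀ y ∈ S, {g : G | ∃ h ∈ H, g = h * y ^ 2} ∩ S = {y ^ 2}) :
    ∀ g : G, ∃! s : G, s ∈ S ∧ s * g⁻¹ ∈ H := by
  intro g
  obtain ⟨h, hh, s, hs, rfl⟩ := hHS g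
  refine ⟨s, ⟨hs, by simpa using H.inv_mem hh⟩, ?_⟩
  rintro t ⟨ht, htg⟩
  have hts : t * s⁻¹ ∈ H := by
    have := H.mul_mem htg hh
    simpa [mul_inv_rev, mul_assoc] using this
  have hconj : s⁻¹ * (t * s⁻¹) * s ∈ H := Subgroup.Normal.conj_mem' ‹H.Normal› _ hts s
  have hmem : s⁻¹ * t * s ^ 2 ∈ ({g : G | ∃ h ∈ H, g = h * s ^ 2} ∩ S) := by
    refine ⟨⟨s⁻¹ * (t * s⁻¹) * s, hconj, by group⟩, hcl t ht s hs⟩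
  rw [hmeet s hs] at hmem
  have heq : s⁻¹ * t * s ^ 2 = s⁻¹ * s * s ^ 2 := by
    simpa using (hmem : s⁻¹ * t * s ^ 2 = s ^ 2)
  have := mul_right_cancel heq
  exact mul_left_cancel this
end

section
/- Let K be a group and A an abelian group (written additively). Let f : K × K → A satisfy the cocycle condition f(x,y) + f(xy,z) = f(y,z) + f(x,yz) and the gyro-condition f(y⁻¹, x) + f(y⁻¹x, y²) = 0 for all x, y, z ∈ K, with f(1,x) = f(x,1) = 0. Then the set A × K with operation (a,x)(b,y) = (a + b + f(x,y), xy) is a group, and the map t : K → A × K, t(x) = (0, x), is a gyro-homomorphism, i.e., t(y⁻¹ x y²) = t(y)⁻¹ t(x) t(y)². -/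
theorem gyro_pairing_extension {K A : Type*} [Group K] [AddCommGroup A]
    (f : K → K → A)
    (h1 : ∀ x : K, f 1 x = 0) (h2 : ∀ x : K, f x 1 = 0)
    (hcoc : ∀ x y z : K, f x y + f (x * y) z = f y z + f x (y * z))
    (hgyro : ∀ x y : K, f y⁻¹ x + f (y⁻¹ * x) (y ^ 2) = 0) :
    ∃ inst : Group (A × K),
      (∀ p q : A × K, inst.mul p q = (p.1 + q.1 + f p.2 q.2, p.2 * q.2)) ∧
      (∀ x y : K,
        ((0 : A), y⁻¹ * x * y ^ 2) =
          inst.mul (inst.mul (inst.inv ((0 : A), y)) ((0 : A), x))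
            (inst.mul ((0 : A), y) ((0 : A), y))) := by
  -- key vanishing lemmas
  have hinv : ∀ z : K, f z⁻¹ z = 0 := by
    intro z
    have := hgyro z z
    rw [inv_mul_cancel, h1] at this
    simpa using this
  have hinv' : ∀ z : K, f z z⁻¹ = 0 := by
    intro z
    have := hcoc z z⁻¹ z
    rw [mul_inv_cancel, inv_mul_cancel, h1, h2, hinv] at this
    simpa using this
  have hdiag : ∀ y : K, f y y = 0 := by
    intro y
    have := hgyro y y⁻¹
    rw [inv_inv] at this
    have h2' : (y⁻¹ : K) ^ 2 = (y * y)⁻¹ := by group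
    rw [h2', hinv'] at this
    simpa using this
  letI : Mul (A × K) := ⟨fun p q => (p.1 + q.1 + f p.2 q.2, p.2 * q.2)⟩
  letI : One (A × K) := ⟨(0, 1)⟩
  letI : Inv (A × K) := ⟨fun p => (-p.1 - f p.2⁻¹ p.2, p.2⁻¹)⟩
  letI inst : Group (A × K) := Group.ofLeftAxioms
    (by
      intro a b c
      show ((a.1 + b.1 + f a.2 b.2) + c.1 + f (a.2 * b.2) c.2, a.2 * b.2 * c.2) = _
      have := hcoc a.2 b.2 c.2
      apply Prod.ext
      · show a.1 + b.1 + f a.2 b.2 + c.1 + f (a.2 * b.2) c.2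
            = a.1 + (b.1 + c.1 + f b.2 c.2) + f a.2 (b.2 * c.2)
        calc a.1 + b.1 + f a.2 b.2 + c.1 + f (a.2 * b.2) c.2
            = a.1 + b.1 + c.1 + (f a.2 b.2 + f (a.2 * b.2) c.2) := by abel
          _ = a.1 + b.1 + c.1 + (f b.2 c.2 + f a.2 (b.2 * c.2)) := by rw [hcoc]
          _ = a.1 + (b.1 + c.1 + f b.2 c.2) + f a.2 (b.2 * c.2) := by abel
      · exact mul_assoc _ _ _)
    (by
      intro a
      show ((0 : A) + a.1 + f 1 a.2, 1 * a.2) = a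
      rw [h1, one_mul]; simp)
    (by
      intro a
      show ((-a.1 - f a.2⁻¹ a.2) + a.1 + f a.2⁻¹ a.2, a.2⁻¹ * a.2) = (0, 1)
      rw [inv_mul_cancel]
      exact Prod.ext (by abel) rfl)
  refine ⟨inst, fun p q => rfl, fun x y => ?_⟩
  show ((0 : A), y⁻¹ * x * y ^ 2) =
    (((-0 - f y⁻¹ y) + 0 + f y⁻¹ x) + (0 + 0 + f y y) + f (y⁻¹ * x) (y * y), y⁻¹ * x * (y * y))
  have hsq : (y : K) * y = y ^ 2 := (sq y).symm
  rw [hsq, hinv, hdiag]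
  have := hgyro x y
  exact Prod.ext (by simpa using this.symm) rfl
end

section
/- Let 1 → H → G → K → 1 be a central extension of groups with a section t : K → G (β ∘ t = id, t(1) = 1) which is a gyro-homomorphism. Define f : K × K → H (identified with its image) by t(x)t(y) = f(x,y) t(xy). Then f satisfies f(y⁻¹, x) f(y⁻¹x, y²) = 1 for all x, y ∈ K; in particular f(y, y⁻¹) = 1 for all y ∈ K. -/
theorem gyro_section_factor_set {H G K : Type*} [Group H] [Group G] [Group K]
    (α : H →* G) (β : G →* K)
    (hαinj : Function.Injective α)
    (hcentral : ∀ h : H, α h ∈ Subgroup.center G)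
    (hβsurj : Function.Surjective β)
    (hker : β.ker = α.range)
    (t : K → G) (hsec : ∀ x : K, β (t x) = x) (ht1 : t 1 = 1)
    (hgyro : ∀ x y : K, t (y⁻¹ * x * y ^ 2) = (t y)⁻¹ * t x * (t y) ^ 2)
    (f : K → K → H) (hf : ∀ x y : K, α (f x y) = t x * t y * (t (x * y))⁻¹) :
    (∀ x y : K, f y⁻¹ x * f (y⁻¹ * x) (y ^ 2) = 1) ∧
      (∀ y : K, f y y⁻¹ = 1) := by
  have hinv : ∀ y : K, t y⁻¹ = (t y)⁻¹ := by
    intro y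
    have h := hgyro y⁻¹ y
    rw [show y⁻¹ * y⁻¹ * y ^ 2 = 1 by group, ht1] at h
    have h' : t y * 1 * (t y ^ 2)⁻¹ = t y⁻¹ := by rw [h]; group
    rw [← h']; group
  have hsq : ∀ y : K, t (y ^ 2) = t y ^ 2 := by
    intro y
    have h := hgyro y y
    rw [show y⁻¹ * y * y ^ 2 = y ^ 2 by group] at h
    rw [h]; group
  have main : ∀ x y : K, f y⁻¹ x * f (y⁻¹ * x) (y ^ 2) = 1 := by
    intro x y
    apply hαinj
    rw [map_mul, map_one, hf, hf, mul_assoc, show y⁻¹ * x * y ^ 2 = (y⁻¹ * x) * y ^ 2 by group,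
      hgyro, hinv, hsq]
    group
  refine ⟨main, fun y => ?_⟩
  apply hαinj
  simp [hf, hinv, ht1]
end

section
/- If a group G is nilpotent of class at most 2 and has exponent 3, then the operation x ∘₁ y = y⁻¹ x y² is commutative and associative; i.e., (G, ∘₁) is an abelian group. -/
section
variable {G : Type*} [Group G]

private lemma mv' {c : G} (h : ∀ g : G, c * g = g * c) (u v : G) :
    u * (c * v) = c * (u * v) := by
  rw [← mul_assoc, ← h, mul_assoc]

private lemma L0' {a b c : G} (h : ∀ g : G, c * g = g * c) (e : a * b = c * (b * a)) :
    b⁻¹ * a * b ^ 2 = c * (a * b) := by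
  calc b⁻¹ * a * b ^ 2 = b⁻¹ * (a * b) * b := by rw [pow_two]; simp only [mul_assoc]
    _ = b⁻¹ * (c * (b * a)) * b := by rw [e]
    _ = (c * (b⁻¹ * (b * a))) * b := by rw [mv' h]
    _ = c * (a * b) := by group

end

open scoped commutatorElement

theorem gyro_op_abelian_of_class_two_exponent_three {G : Type*} [Group G]
    (hcomm : ∀ a b : G, ⁅a, b⁆ ∈ Subgroup.center G)
    (hexp : ∀ x : G, x ^ 3 = 1) :
    (∀ x y : G, y⁻¹ * x * y ^ 2 = x⁻¹ * y * x ^ 2) ∧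
      (∀ x y z : G,
        z⁻¹ * (y⁻¹ * x * y ^ 2) * z ^ 2 =
          (z⁻¹ * y * z ^ 2)⁻¹ * x * (z⁻¹ * y * z ^ 2) ^ 2) := by
  have hc : ∀ a b g : G, ⁅a, b⁆ * g = g * ⁅a, b⁆ := fun a b g =>
    ((Subgroup.mem_center_iff.mp (hcomm a b)) g).symm
  have e : ∀ a b : G, a * b = ⁅a, b⁆ * (b * a) := by
    intro a b; rw [commutatorElement_def]; group
  have cube : ∀ a b : G, ⁅a, b⁆ ^ 3 = 1 := by
    intro a b
    have h2 : Commute ⁅a, b⁆ (b * a) := hc a b (b * a)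
    calc ⁅a, b⁆ ^ 3 = ⁅a, b⁆ ^ 3 * (b * a) ^ 3 := by rw [hexp (b * a), mul_one]
      _ = (a * b) ^ 3 := by rw [e a b]; exact (h2.mul_pow 3).symm
      _ = 1 := hexp _
  have trivL : ∀ a b g : G, ⁅⁅a, b⁆, g⁆ = 1 := by
    intro a b g; rw [commutatorElement_def, hc a b g]; group
  have trivR : ∀ g a b : G, ⁅g, ⁅a, b⁆⁆ = 1 := by
    intro g a b; rw [commutatorElement_def, ← hc a b g]; group
  have blL : ∀ a b c : G, ⁅a * b, c⁆ = ⁅a, c⁆ * ⁅b, c⁆ := by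
    intro a b c
    calc ⁅a * b, c⁆ = a * (⁅b, c⁆ * c) * a⁻¹ * c⁻¹ := by
          simp only [commutatorElement_def]; group
      _ = (⁅b, c⁆ * (a * c)) * a⁻¹ * c⁻¹ := by rw [mv' (fun g => hc b c g)]
      _ = ⁅b, c⁆ * ⁅a, c⁆ := by simp only [commutatorElement_def]; group
      _ = ⁅a, c⁆ * ⁅b, c⁆ := (hc a c ⁅b, c⁆).symm
  have blR : ∀ a b c : G, ⁅a, b * c⁆ = ⁅a, b⁆ * ⁅a, c⁆ := by
    intro a b c
    calc ⁅a, b * c⁆ = ⁅a, b⁆ * (b * (⁅a, c⁆ * b⁻¹)) := by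
          simp only [commutatorElement_def]; group
      _ = ⁅a, b⁆ * (⁅a, c⁆ * (b * b⁻¹)) := by rw [mv' (fun g => hc a c g)]
      _ = ⁅a, b⁆ * ⁅a, c⁆ := by group
  constructor
  · intro x y
    have e1' : y * x = ⁅x, y⁆⁻¹ * (x * y) := by rw [e x y]; group
    have hinv : ∀ g : G, ⁅x, y⁆⁻¹ * g = g * ⁅x, y⁆⁻¹ := fun g =>
      Commute.inv_left (hc x y g)
    have h3' : ⁅x, y⁆ * (⁅x, y⁆ * ⁅x, y⁆) = 1 := by
      rw [← pow_three]; exact cube x y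
    have hi : ⁅x, y⁆⁻¹ = ⁅x, y⁆ * ⁅x, y⁆ := inv_eq_of_mul_eq_one_right h3'
    rw [L0' (fun g => hc x y g) (e x y), L0' hinv e1', e1', hi]
    symm
    calc ⁅x, y⁆ * ⁅x, y⁆ * (⁅x, y⁆ * ⁅x, y⁆ * (x * y))
        = ⁅x, y⁆ * (⁅x, y⁆ * ⁅x, y⁆) * (⁅x, y⁆ * (x * y)) := by
          simp only [mul_assoc]
      _ = ⁅x, y⁆ * (x * y) := by rw [h3', one_mul]
  · intro x y z
    rw [L0' (fun g => hc x y g) (e x y), L0' (fun g => hc y z g) (e y z)]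
    rw [L0' (fun g => hc (⁅x, y⁆ * (x * y)) z g) (e (⁅x, y⁆ * (x * y)) z),
        L0' (fun g => hc x (⁅y, z⁆ * (y * z)) g) (e x (⁅y, z⁆ * (y * z)))]
    rw [blL, blL, blR, blR, trivL, trivR]
    simp only [one_mul, mul_assoc]
    rw [mv' (fun g => hc y z g) x (y * z),
        mv' (fun g => hc x y g) ⁅y, z⁆ (x * (y * z)),
        mv' (fun g => hc x y g) ⁅x, z⁆ (⁅y, z⁆ * (x * (y * z)))]
end
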